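/- Let G be a finite simple graph whose vertex set is partitioned into sets A and B such that: A is a clique in G (any two distinct vertices of A are adjacent), B is an independent set in G (no two vertices of B are adjacent), and the B-neighborhoods of the vertices of A are totally ordered by inclusion (for all u, v ∈ A, either N(u) ∩ B ⊆ N(v) ∩ B or N(v) ∩ B ⊆ N(u) ∩ B). Then G contains no induced 2K_2, no induced cycle on four vertices, and no induced path on four vertices. -/
import Mathlib

lemma no_alt_cycle {V : Type*} (G : SimpleGraph V) (A B : Set V)
    (hpart : ∀ v : V, v ∈ A ↔ v ∉ B)
    (hclique : ∀ u ∈ A, ∀ v ∈ A, u ≠ v → G.Adj u v)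
    (hindep : ∀ u ∈ B, ∀ v ∈ B, ¬ G.Adj u v)
    (hnested : ∀ u ∈ A, ∀ v ∈ A,
      (∀ w ∈ B, G.Adj u w → G.Adj v w) ∨ (∀ w ∈ B, G.Adj v w → G.Adj u w))
    {x y z w : V} (hxw : x ≠ w) (hyz : y ≠ z)
    (exy : G.Adj x y) (ezw : G.Adj z w)
    (nyz : ¬ G.Adj y z) (nxw : ¬ G.Adj x w) : False := by
  by_cases hx : x ∈ A
  · by_cases hz : z ∈ A
    · by_cases hy : y ∈ A
      · exact nyz (hclique y hy z hz hyz)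
      · by_cases hw : w ∈ A
        · exact nxw (hclique x hx w hw hxw)
        · have hyB : y ∈ B := by by_contra h; exact hy ((hpart y).2 h)
          have hwB : w ∈ B := by by_contra h; exact hw ((hpart w).2 h)
          rcases hnested x hx z hz with h | h
          · exact nyz ((h y hyB exy).symm)
          · exact nxw (h w hwB ezw)
    · have hzB : z ∈ B := by by_contra h; exact hz ((hpart z).2 h)
      have hwA : w ∈ A := by
        by_contra h
        have hwB : w ∈ B := by by_contra h2; exact h ((hpart w).2 h2)
        exact hindep z hzB w hwB ezw
      exact nxw (hclique x hx w hwA hxw)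
  · have hxB : x ∈ B := by by_contra h; exact hx ((hpart x).2 h)
    have hyA : y ∈ A := by
      by_contra h
      have hyB : y ∈ B := by by_contra h2; exact h ((hpart y).2 h2)
      exact hindep x hxB y hyB exy
    by_cases hz : z ∈ A
    · exact nyz (hclique y hyA z hz hyz)
    · have hzB : z ∈ B := by by_contra h; exact hz ((hpart z).2 h)
      have hwA : w ∈ A := by
        by_contra h
        have hwB : w ∈ B := by by_contra h2; exact h ((hpart w).2 h2)
        exact hindep z hzB w hwB ezw
      rcases hnested y hyA w hwA with h | h
      · exact nxw ((h x hxB exy.symm).symm)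
      · exact nyz (h z hzB ezw.symm)


/-- A graph that is the union of a clique `A` and an independent set `B` whose
`A`-side neighborhoods in `B` are totally ordered by inclusion contains no induced
`2K₂`, no induced `C₄` and no induced `P₄`. -/
theorem clique_plus_chain_is_threshold {V : Type*} [Fintype V]
    (G : SimpleGraph V) (A B : Set V)
    (hpart : ∀ v : V, v ∈ A ↔ v ∉ B)
    (hclique : ∀ u ∈ A, ∀ v ∈ A, u ≠ v → G.Adj u v)
    (hindep : ∀ u ∈ B, ∀ v ∈ B, ¬ G.Adj u v)
    (hnested : ∀ u ∈ A, ∀ v ∈ A,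
      (∀ w ∈ B, G.Adj u w → G.Adj v w) ∨ (∀ w ∈ B, G.Adj v w → G.Adj u w)) :
    (¬ ∃ a b c d : V,
      a ≠ b ∧ a ≠ c ∧ a ≠ d ∧ b ≠ c ∧ b ≠ d ∧ c ≠ d ∧
      G.Adj a b ∧ G.Adj c d ∧
      ¬ G.Adj a c ∧ ¬ G.Adj a d ∧ ¬ G.Adj b c ∧ ¬ G.Adj b d) ∧
    (¬ ∃ a b c d : V,
      a ≠ b ∧ a ≠ c ∧ a ≠ d ∧ b ≠ c ∧ b ≠ d ∧ c ≠ d ∧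
      G.Adj a b ∧ G.Adj b c ∧ G.Adj c d ∧ G.Adj d a ∧
      ¬ G.Adj a c ∧ ¬ G.Adj b d) ∧
    (¬ ∃ a b c d : V,
      a ≠ b ∧ a ≠ c ∧ a ≠ d ∧ b ≠ c ∧ b ≠ d ∧ c ≠ d ∧
      G.Adj a b ∧ G.Adj b c ∧ G.Adj c d ∧
      ¬ G.Adj a c ∧ ¬ G.Adj a d ∧ ¬ G.Adj b d) := by
  refine ⟨?_, ?_, ?_⟩
  · rintro ⟨a, b, c, d, hab, hac, had, hbc, hbd, hcd, eab, ecd, nac, nad, nbc, nbd⟩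
    exact no_alt_cycle G A B hpart hclique hindep hnested had hbc eab ecd nbc nad
  · rintro ⟨a, b, c, d, hab, hac, had, hbc, hbd, hcd, eab, ebc, ecd, eda, nac, nbd⟩
    exact no_alt_cycle G A B hpart hclique hindep hnested hac hbd eab ecd.symm
      nbd nac
  · rintro ⟨a, b, c, d, hab, hac, had, hbc, hbd, hcd, eab, ebc, ecd, nac, nad, nbd⟩
    exact no_alt_cycle G A B hpart hclique hindep hnested hbd hac eab.symm ecd
      nac nbd
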